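/- Under the GF-RLS error dynamics θ̃_{k+1} = M_kθ̃_k with F_k ⪰ 0 and (P_k⁻¹−F_k)⁻¹ ⪯ bI_n for all k, the function V(k,θ̃) = θ̃ᵀP_k⁻¹θ̃ satisfies V(k+1, M_kθ̃) − V(k,θ̃) ≤ −θ̃ᵀF_kθ̃ ≤ 0 for all k ≥ 0 and θ̃ ∈ ℝ^n. -/

import Mathlib

open Matrix

/-!
Write `R = P_k⁻¹ - F_k`, `A = φ_kᵀφ_k`, so that `P_{k+1}⁻¹ = R + A`, and let `w = M_k v`.
Then `(R + A) w = R v`, i.e. `R (v - w) = A w`, and with `Rᵀ = R` this gives the exact identity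
`vᵀRv = wᵀ(R + A)w + wᵀAw + (v - w)ᵀR(v - w)`. As `R, A ⪰ 0`,
`V(k+1, w) ≤ vᵀRv = V(k, v) - vᵀF_kv`.
-/

namespace Matrix

variable {ι α : Type*} [Fintype ι]

theorem dotProduct_mulVec_eq_of_add_mulVec_eq [CommRing α] {R A : Matrix ι ι α} (hR : R.IsSymm)
    {v w : ι → α} (h : (R + A) *ᵥ w = R *ᵥ v) :
    v ⬝ᵥ R *ᵥ v = w ⬝ᵥ (R + A) *ᵥ w + w ⬝ᵥ A *ᵥ w + (v - w) ⬝ᵥ R *ᵥ (v - w) := by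
  set z := v - w
  have hRz : R *ᵥ z = A *ᵥ w := by
    rw [mulVec_sub, ← h, add_mulVec]
    abel
  have hzw : z ⬝ᵥ R *ᵥ w = w ⬝ᵥ R *ᵥ z := by
    rw [← dotProduct_transpose_mulVec, hR.eq]
  have hv : v = w + z := (add_sub_cancel w v).symm
  rw [hv, mulVec_add, add_mulVec]
  simp only [add_dotProduct, dotProduct_add]
  rw [hzw, hRz]
  ring

theorem dotProduct_add_mulVec_le_of_add_mulVec_eq {R A : Matrix ι ι ℝ} (hR : R.PosSemidef)
    (hA : A.PosSemidef) {v w : ι → ℝ} (h : (R + A) *ᵥ w = R *ᵥ v) :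
    w ⬝ᵥ (R + A) *ᵥ w ≤ v ⬝ᵥ R *ᵥ v := by
  have hAw := hA.dotProduct_mulVec_nonneg w
  have hRz := hR.dotProduct_mulVec_nonneg (v - w)
  rw [star_trivial] at hAw hRz
  rw [dotProduct_mulVec_eq_of_add_mulVec_eq (isHermitian_iff_isSymm.mp hR.isHermitian) h]
  linarith

theorem nonsing_inv_mulVec_one_sub_mul_mulVec [DecidableEq ι] [CommRing α] {P : Matrix ι ι α}
    (hP : IsUnit P.det) (A : Matrix ι ι α) (v : ι → α) :
    P⁻¹ *ᵥ (1 - P * A) *ᵥ v = (P⁻¹ - A) *ᵥ v := by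
  rw [mulVec_mulVec, Matrix.mul_sub, Matrix.mul_one, ← Matrix.mul_assoc, nonsing_inv_mul _ hP,
    Matrix.one_mul]

end Matrix

theorem lyapunov_decrease_general (n p : ℕ)
    (φ : ℕ → Matrix (Fin p) (Fin n) ℝ)
    (F : ℕ → Matrix (Fin n) (Fin n) ℝ)
    (P : ℕ → Matrix (Fin n) (Fin n) ℝ) (hP : ∀ k, (P k).PosDef)
    (hPF : ∀ k, ((P k)⁻¹ - F k).PosDef)
    (hupd : ∀ k, (P (k + 1))⁻¹ = (P k)⁻¹ - F k + (φ k)ᵀ * φ k)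
    (hFpsd : ∀ k, (F k).PosSemidef) :
    ∀ (k : ℕ) (v : Fin n → ℝ),
      ((1 - P (k + 1) * (φ k)ᵀ * φ k).mulVec v) ⬝ᵥ
          ((P (k + 1))⁻¹).mulVec ((1 - P (k + 1) * (φ k)ᵀ * φ k).mulVec v)
        - v ⬝ᵥ ((P k)⁻¹).mulVec v
        ≤ -(v ⬝ᵥ (F k).mulVec v) ∧
      -(v ⬝ᵥ (F k).mulVec v) ≤ 0 := by
  intro k v
  have hdet : IsUnit (P (k + 1)).det := (isUnit_iff_isUnit_det _).mp (hP (k + 1)).isUnit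
  have hMv : (P (k + 1))⁻¹ *ᵥ (1 - P (k + 1) * (φ k)ᵀ * φ k) *ᵥ v = ((P k)⁻¹ - F k) *ᵥ v := by
    rw [Matrix.mul_assoc, nonsing_inv_mulVec_one_sub_mul_mulVec hdet, hupd k, add_sub_cancel_right]
  rw [hupd k] at hMv ⊢
  have hA : ((φ k)ᵀ * φ k).PosSemidef := by
    simpa using posSemidef_conjTranspose_mul_self (φ k)
  have hV := dotProduct_add_mulVec_le_of_add_mulVec_eq (hPF k).posSemidef hA hMv
  rw [sub_mulVec (P k)⁻¹, dotProduct_sub] at hV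
  have hFv := (hFpsd k).dotProduct_mulVec_nonneg v
  rw [star_trivial] at hFv
  constructor <;> linarith

/-- the Lyapunov function `V(k,v) = vᵀP_k⁻¹v` decreases along the GF-RLS
error dynamics: `V(k+1, M_kv) − V(k,v) ≤ −vᵀF_kv ≤ 0`. -/
theorem lyapunov_decrease (n p : ℕ)
    (φ : ℕ → Matrix (Fin p) (Fin n) ℝ)
    (F : ℕ → Matrix (Fin n) (Fin n) ℝ)
    (P : ℕ → Matrix (Fin n) (Fin n) ℝ) (hP : ∀ k, (P k).PosDef)
    (hPF : ∀ k, ((P k)⁻¹ - F k).PosDef)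
    (hupd : ∀ k, (P (k + 1))⁻¹ = (P k)⁻¹ - F k + (φ k)ᵀ * φ k)
    (hFpsd : ∀ k, (F k).PosSemidef)
    (b : ℝ) (hb : 0 < b)
    (hbd : ∀ k, (b • (1 : Matrix (Fin n) (Fin n) ℝ) - ((P k)⁻¹ - F k)⁻¹).PosSemidef) :
    ∀ (k : ℕ) (v : Fin n → ℝ),
      ((1 - P (k + 1) * (φ k)ᵀ * φ k).mulVec v) ⬝ᵥ
          ((P (k + 1))⁻¹).mulVec ((1 - P (k + 1) * (φ k)ᵀ * φ k).mulVec v)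
        - v ⬝ᵥ ((P k)⁻¹).mulVec v
        ≤ -(v ⬝ᵥ (F k).mulVec v) ∧
      -(v ⬝ᵥ (F k).mulVec v) ≤ 0 :=
  lyapunov_decrease_general n p φ F P hP hPF hupd hFpsd
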